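/- Let d be a positive integer, ℓ ∈ [0,1]^d, and p, q ∈ ℝ^d with p(i) > 0 and q(i) ≥ 0 for all i. Then ( Σ_{i=1}^d ℓ(i)·max(p(i) − q(i), 0) )² ≤ 2 · ( Σ_{i=1}^d ℓ(i)·p(i) ) · Ent(q,p). -/

import Mathlib

/-!
With `t = q / p`, the entropy term is `p * klFun t`, and for `q < p` the coordinatewise bound
`(p - q)² ≤ 2 p · p klFun t` reduces to `t² - 1 ≤ 2 t log t` on `(0, 1]`, which is
`sinh (log t) ≤ log t` for `log t ≤ 0`. Cauchy–Schwarz with weights `ℓ i * p i` and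
`2 p i klFun (q i / p i)`, together with `ℓ i ^ 2 ≤ ℓ i`, sums these bounds.
-/

open Real Finset InformationTheory

theorem sq_one_sub_le_two_mul_klFun {x : ℝ} (hx0 : 0 ≤ x) (hx1 : x ≤ 1) :
    (1 - x) ^ 2 ≤ 2 * klFun x := by
  rcases hx0.eq_or_lt with rfl | hx0
  · norm_num [klFun_zero]
  have hsinh : (x - x⁻¹) / 2 ≤ log x := by
    rw [← sinh_log hx0]
    exact sinh_le_self_iff.2 (log_nonpos hx0.le hx1)
  have hx : x * x⁻¹ = 1 := mul_inv_cancel₀ hx0.ne'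
  rw [klFun_apply]
  nlinarith [mul_le_mul_of_nonneg_left hsinh hx0.le]

theorem mul_klFun_div {p : ℝ} (hp : p ≠ 0) (q : ℝ) :
    p * klFun (q / p) = q * log (q / p) - q + p := by
  rw [klFun_apply]
  field_simp
  ring

theorem sq_max_sub_le_two_mul_mul_klFun {p q : ℝ} (hp : 0 < p) (hq : 0 ≤ q) :
    max (p - q) 0 ^ 2 ≤ 2 * p * (p * klFun (q / p)) := by
  rcases le_total p q with hpq | hqp
  · rw [max_eq_right (sub_nonpos.2 hpq), zero_pow two_ne_zero]
    have := klFun_nonneg (div_nonneg hq hp.le)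
    positivity
  · rw [max_eq_left (sub_nonneg.2 hqp)]
    have key := sq_one_sub_le_two_mul_klFun (div_nonneg hq hp.le) ((div_le_one hp).2 hqp)
    calc (p - q) ^ 2 = p ^ 2 * (1 - q / p) ^ 2 := by field_simp
      _ ≤ p ^ 2 * (2 * klFun (q / p)) := by gcongr
      _ = 2 * p * (p * klFun (q / p)) := by ring

theorem stmt_8_general (d : ℕ) (ℓ p q : Fin d → ℝ)
    (hℓ : ∀ i, ℓ i ∈ Set.Icc (0 : ℝ) 1) (hp : ∀ i, 0 < p i) (hq : ∀ i, 0 ≤ q i) :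
    (∑ i, ℓ i * max (p i - q i) 0) ^ 2 ≤
      2 * (∑ i, ℓ i * p i) * ∑ i, (q i * Real.log (q i / p i) - q i + p i) := by
  rw [← sum_congr rfl fun i _ => mul_klFun_div (hp i).ne' (q i), mul_assoc, mul_left_comm,
    mul_sum]
  refine sum_sq_le_sum_mul_sum_of_sq_le_mul univ (fun i _ => mul_nonneg (hℓ i).1 (hp i).le)
    (fun i _ => ?_) fun i _ => ?_
  · have := klFun_nonneg (div_nonneg (hq i) (hp i).le)
    have := hp i
    positivity
  · obtain ⟨hℓ0, hℓ1⟩ := hℓ i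
    calc (ℓ i * max (p i - q i) 0) ^ 2 = ℓ i * (ℓ i * max (p i - q i) 0 ^ 2) := by ring
      _ ≤ 1 * (ℓ i * (2 * p i * (p i * klFun (q i / p i)))) := by
          gcongr
          exact sq_max_sub_le_two_mul_mul_klFun (hp i) (hq i)
      _ = ℓ i * p i * (2 * (p i * klFun (q i / p i))) := by ring

theorem stmt_8 (d : ℕ) (hd : 0 < d) (ℓ p q : Fin d → ℝ)
    (hℓ : ∀ i, ℓ i ∈ Set.Icc (0 : ℝ) 1) (hp : ∀ i, 0 < p i) (hq : ∀ i, 0 ≤ q i) :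
    (∑ i, ℓ i * max (p i - q i) 0) ^ 2 ≤
      2 * (∑ i, ℓ i * p i) * ∑ i, (q i * Real.log (q i / p i) - q i + p i) :=
  stmt_8_general d ℓ p q hℓ hp hq
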